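/- Let f : Δ_{n-1} → ℝ be differentiable with L-Lipschitz gradient and f* = min_{Δ_{n-1}} f. Let {x_k} be generated by the AFW algorithm started at a vertex x_0 with stepsizes α_k ≥ ᾱ_k = min(α_k^max, −∇f(x_k)ᵀd_k/(L‖d_k‖²)) satisfying f(x_k) − f(x_{k+1}) ≥ ρ ᾱ_k (−∇f(x_k)ᵀd_k) for some ρ > 0. Then for every T ∈ ℕ the minimal Frank–Wolfe gap g*_T = min_{0≤k≤T−1} g(x_k) satisfies g*_T ≤ max( √(4L(f(x_0) − f*)/(ρT)), 4(f(x_0) − f*)/T ). -/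

import Mathlib

open RealInnerProductSpace

def probSimplex (n : ℕ) : Set (EuclideanSpace ℝ (Fin n)) :=
  {x | (∀ i, 0 ≤ x i) ∧ ∑ i, x i = 1}

noncomputable def stdVec {n : ℕ} (i : Fin n) : EuclideanSpace ℝ (Fin n) :=
  EuclideanSpace.single i 1

noncomputable def mult {n : ℕ} (G : EuclideanSpace ℝ (Fin n) → EuclideanSpace ℝ (Fin n))
    (x : EuclideanSpace ℝ (Fin n)) (i : Fin n) : ℝ :=
  ⟪G x, stdVec i - x⟫

/-- The Frank–Wolfe gap `g(x) = max_i (−λ_i(x))`. -/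
noncomputable def fwGap {n : ℕ} (G : EuclideanSpace ℝ (Fin (n+1)) → EuclideanSpace ℝ (Fin (n+1)))
    (x : EuclideanSpace ℝ (Fin (n+1))) : ℝ :=
  Finset.univ.sup' Finset.univ_nonempty (fun i => -mult G x i)

/-!
Let `g` be the smallest gap among the first `T` iterates and `c = min (ρ g² / (2L)) (g / 2)`.
Each step either is a drop step, which removes a vertex from the support, or decreases `f` by at
least `c`: a step with `ᾱ_k < α_k^max` gains `ρ (-∇fᵀd)² / (L ‖d‖²) ≥ ρ g² / (2L)` because
`‖d‖² ≤ 2` on the simplex, and a full Frank–Wolfe step taken because `L ‖d‖² < -∇fᵀd` gains at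
least `g / 2` by the descent lemma. The support starts with one vertex, grows by at most one per
step and is never empty, so at most half of the steps are drop steps. Hence
`c T / 2 ≤ f(x₀) - f*`, which rearranges to the claimed bound.
-/

open Finset

section Descent

variable {E : Type*} [NormedAddCommGroup E] [InnerProductSpace ℝ E] [CompleteSpace E]

theorem apply_add_le_of_lipschitz_gradient {f : E → ℝ} {G : E → E}
    (hG : ∀ x, HasGradientAt f (G x) x) {L : ℝ} (hL : ∀ x y, ‖G x - G y‖ ≤ L * ‖x - y‖)
    (x v : E) : f (x + v) ≤ f x + ⟪G x, v⟫ + L / 2 * ‖v‖ ^ 2 := by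
  have hf : ∀ t : ℝ, HasDerivAt (fun s : ℝ => f (x + s • v) - s * ⟪G x, v⟫)
      (⟪G (x + t • v) - G x, v⟫) t := by
    intro t
    have hline : HasDerivAt (fun s : ℝ => x + s • v) v t := by
      simpa using ((hasDerivAt_id t).smul_const v).const_add x
    have hcomp : HasDerivAt (fun s : ℝ => f (x + s • v)) ⟪G (x + t • v), v⟫ t := by
      have h := (hG (x + t • v)).hasFDerivAt.comp_hasDerivAt t hline
      simp only [InnerProductSpace.toDual_apply_apply] at h
      exact h
    rw [inner_sub_left]
    exact hcomp.sub (by simpa using (hasDerivAt_id t).mul_const ⟪G x, v⟫)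
  have hB : ∀ t : ℝ, HasDerivAt (fun s : ℝ => f x + L / 2 * s ^ 2 * ‖v‖ ^ 2)
      (L * t * ‖v‖ ^ 2) t := by
    intro t
    refine (((hasDerivAt_pow 2 t).const_mul (L / 2)).mul_const (‖v‖ ^ 2)).const_add (f x)
      |>.congr_deriv ?_
    simp only [Nat.cast_ofNat, Nat.add_one_sub_one, pow_one]
    ring
  have hbound : ∀ t ∈ Set.Ico (0 : ℝ) 1, ⟪G (x + t • v) - G x, v⟫ ≤ L * t * ‖v‖ ^ 2 := by
    intro t ht
    calc ⟪G (x + t • v) - G x, v⟫ ≤ ‖G (x + t • v) - G x‖ * ‖v‖ := real_inner_le_norm _ _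
      _ ≤ L * ‖t • v‖ * ‖v‖ := by
          gcongr
          simpa using hL (x + t • v) x
      _ = L * t * ‖v‖ ^ 2 := by rw [norm_smul, Real.norm_of_nonneg ht.1]; ring
  have h := image_le_of_deriv_right_le_deriv_boundary
    (fun t _ => (hf t).continuousAt.continuousWithinAt)
    (fun t _ => (hf t).hasDerivWithinAt) (by simp)
    (fun t _ => (hB t).continuousAt.continuousWithinAt)
    (fun t _ => (hB t).hasDerivWithinAt) hbound (Set.right_mem_Icc.2 zero_le_one)
  simp only [one_smul, one_mul, one_pow, mul_one] at h
  linarith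

end Descent

section Simplex

variable {m : ℕ}

noncomputable def coordSupport (x : EuclideanSpace ℝ (Fin m)) : Finset (Fin m) :=
  univ.filter fun i => x i ≠ 0

theorem stdVec_apply (i j : Fin m) : stdVec i j = if j = i then 1 else 0 := by
  simp [stdVec]

theorem stdVec_mem_probSimplex (i : Fin m) : stdVec i ∈ probSimplex m :=
  ⟨fun j => by rw [stdVec_apply]; split_ifs <;> norm_num, by simp [stdVec_apply]⟩

theorem coordSupport_stdVec (i : Fin m) : coordSupport (stdVec i) = {i} := by
  ext j
  simp [coordSupport, stdVec_apply]

theorem apply_le_one_of_mem_probSimplex {x : EuclideanSpace ℝ (Fin m)} (hx : x ∈ probSimplex m)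
    (i : Fin m) : x i ≤ 1 :=
  hx.2 ▸ single_le_sum (fun j _ => hx.1 j) (mem_univ i)

theorem eq_stdVec_of_apply_eq_one {x : EuclideanSpace ℝ (Fin m)} (hx : x ∈ probSimplex m)
    {i : Fin m} (hi : x i = 1) : x = stdVec i := by
  have hrest : ∑ j ∈ univ.erase i, x j = 0 := by
    linarith [hx.2, add_sum_erase univ (fun j => x j) (mem_univ i)]
  ext j
  rw [stdVec_apply]
  split_ifs with hji
  · rw [hji, hi]
  · exact (sum_eq_zero_iff_of_nonneg fun k _ => hx.1 k).1 hrest j (mem_erase.2 ⟨hji, mem_univ j⟩)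

theorem coordSupport_nonempty {x : EuclideanSpace ℝ (Fin m)} (hx : x ∈ probSimplex m) :
    (coordSupport x).Nonempty := by
  by_contra h
  have hzero : ∀ j, x j = 0 := by simpa [coordSupport, Finset.not_nonempty_iff_eq_empty] using h
  simpa [hzero] using hx.2

theorem norm_sub_sq_le_two {x y : EuclideanSpace ℝ (Fin m)} (hx : x ∈ probSimplex m)
    (hy : y ∈ probSimplex m) : ‖x - y‖ ^ 2 ≤ 2 := by
  have hcoord : ∀ i, (x i - y i) ^ 2 ≤ x i + y i := fun i => by
    nlinarith [hx.1 i, hy.1 i, apply_le_one_of_mem_probSimplex hx i,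
      apply_le_one_of_mem_probSimplex hy i]
  calc ‖x - y‖ ^ 2 = ∑ i, (x i - y i) ^ 2 := by simp [EuclideanSpace.norm_sq_eq]
    _ ≤ ∑ i, (x i + y i) := sum_le_sum fun i _ => hcoord i
    _ = 2 := by rw [sum_add_distrib, hx.2, hy.2]; norm_num

theorem card_coordSupport_add_smul_le {x d : EuclideanSpace ℝ (Fin m)} {i : Fin m}
    (hd : d = stdVec i - x ∨ d = x - stdVec i) (β : ℝ) :
    #(coordSupport (x + β • d)) ≤ #(coordSupport x) + 1 := by
  have hsub : coordSupport (x + β • d) ⊆ insert i (coordSupport x) := by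
    intro j hj
    by_contra hnot
    simp only [coordSupport, mem_insert, mem_filter, mem_univ, true_and, not_or, not_not] at hj hnot
    rcases hd with rfl | rfl <;> simp [stdVec_apply, hnot.1, hnot.2] at hj
  exact (card_le_card hsub).trans (card_insert_le _ _)

theorem card_coordSupport_drop_step {x : EuclideanSpace ℝ (Fin m)} {i : Fin m}
    (hpos : 0 < x i) (hlt : x i < 1) :
    #(coordSupport (x + (x i / (1 - x i)) • (x - stdVec i))) + 1 ≤ #(coordSupport x) := by
  have hmem : i ∈ coordSupport x := by simp [coordSupport, hpos.ne']
  have hsub : coordSupport (x + (x i / (1 - x i)) • (x - stdVec i)) ⊆ (coordSupport x).erase i := by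
    intro j hj
    simp only [coordSupport, mem_erase, mem_filter, mem_univ, true_and] at hj ⊢
    by_cases hji : j = i
    · subst hji
      refine absurd ?_ hj
      have : 1 - x j ≠ 0 := by linarith
      simp [stdVec_apply]
      field_simp
      ring
    · refine ⟨hji, fun h0 => hj ?_⟩
      simp [stdVec_apply, hji, h0]
  have := card_le_card hsub
  rw [card_erase_of_mem hmem] at this
  have := card_pos.2 ⟨i, hmem⟩
  omega

end Simplex

section AFWStep

variable {m : ℕ} {x x' d : EuclideanSpace ℝ (Fin m)} {αmax : ℝ}

def IsAFWDirection (x d : EuclideanSpace ℝ (Fin m)) (αmax : ℝ) : Prop :=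
  (∃ i, d = stdVec i - x ∧ αmax = 1) ∨
    (∃ i, 0 < x i ∧ d = x - stdVec i ∧ αmax = x i / (1 - x i))

namespace IsAFWDirection

theorem maxStep_nonneg (hdir : IsAFWDirection x d αmax) (hx : x ∈ probSimplex m) :
    0 ≤ αmax := by
  rcases hdir with ⟨i, -, rfl⟩ | ⟨i, hpos, -, rfl⟩
  · exact zero_le_one
  · exact div_nonneg hpos.le (sub_nonneg.2 (apply_le_one_of_mem_probSimplex hx i))

theorem norm_sq_le_two (hdir : IsAFWDirection x d αmax) (hx : x ∈ probSimplex m) :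
    ‖d‖ ^ 2 ≤ 2 := by
  rcases hdir with ⟨i, rfl, -⟩ | ⟨i, -, rfl, -⟩
  · exact norm_sub_sq_le_two (stdVec_mem_probSimplex i) hx
  · exact norm_sub_sq_le_two hx (stdVec_mem_probSimplex i)

theorem card_coordSupport_add_smul_le (hdir : IsAFWDirection x d αmax) (β : ℝ) :
    #(coordSupport (x + β • d)) ≤ #(coordSupport x) + 1 := by
  rcases hdir with ⟨i, hd, -⟩ | ⟨i, -, hd, -⟩
  · exact _root_.card_coordSupport_add_smul_le (Or.inl hd) β
  · exact _root_.card_coordSupport_add_smul_le (Or.inr hd) β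

end IsAFWDirection

variable {f : EuclideanSpace ℝ (Fin m) → ℝ} {G : EuclideanSpace ℝ (Fin m) → EuclideanSpace ℝ (Fin m)}
  {L ρ α ᾱ g : ℝ}

theorem afw_step_le (hx : x ∈ probSimplex m) (hdir : IsAFWDirection x d αmax)
    (hᾱ : ᾱ = min αmax (-⟪G x, d⟫ / (L * ‖d‖ ^ 2))) (hL : 0 ≤ L) (hρ : 0 ≤ ρ)
    (hdec : f x - f x' ≥ ρ * ᾱ * (-⟪G x, d⟫)) (hslope : 0 ≤ -⟪G x, d⟫) : f x' ≤ f x := by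
  have hᾱ_nonneg : 0 ≤ ᾱ := hᾱ ▸ le_min (hdir.maxStep_nonneg hx) (by positivity)
  nlinarith [mul_nonneg (mul_nonneg hρ hᾱ_nonneg) hslope]

theorem afw_step_decrease_or_drop (hG : ∀ y, HasGradientAt f (G y) y)
    (hL : ∀ y z, ‖G y - G z‖ ≤ L * ‖y - z‖) (hLpos : 0 < L) (hρ : 0 < ρ)
    (hx : x ∈ probSimplex m) (hdir : IsAFWDirection x d αmax) (hx' : x' = x + α • d)
    (hᾱ : ᾱ = min αmax (-⟪G x, d⟫ / (L * ‖d‖ ^ 2))) (hα : ᾱ ≤ α ∧ α ≤ αmax)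
    (hdec : f x - f x' ≥ ρ * ᾱ * (-⟪G x, d⟫)) (hg : 0 < g) (hgd : g ≤ -⟪G x, d⟫) :
    min (ρ * g ^ 2 / (2 * L)) (g / 2) ≤ f x - f x' ∨
      #(coordSupport x') + 1 ≤ #(coordSupport x) := by
  have hslope : 0 < -⟪G x, d⟫ := hg.trans_le hgd
  have hd : d ≠ 0 := by rintro rfl; simp at hslope
  have hLd : 0 < L * ‖d‖ ^ 2 := by positivity
  by_cases hshort : -⟪G x, d⟫ / (L * ‖d‖ ^ 2) ≤ αmax
  · left
    rw [hᾱ, min_eq_right hshort] at hdec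
    calc min (ρ * g ^ 2 / (2 * L)) (g / 2) ≤ ρ * g ^ 2 / (L * 2) := by
          rw [mul_comm L]; exact min_le_left _ _
      _ ≤ ρ * (-⟪G x, d⟫) ^ 2 / (L * ‖d‖ ^ 2) := by
          gcongr
          exact hdir.norm_sq_le_two hx
      _ = ρ * (-⟪G x, d⟫ / (L * ‖d‖ ^ 2)) * (-⟪G x, d⟫) := by field_simp
      _ ≤ f x - f x' := hdec
  rw [not_le] at hshort
  have hαmax : α = αmax := le_antisymm hα.2 (by rw [← min_eq_left hshort.le, ← hᾱ]; exact hα.1)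
  subst hx' hαmax
  rcases hdir with ⟨i, rfl, rfl⟩ | ⟨i, hpos, rfl, rfl⟩
  · left
    have hfull : L * ‖stdVec i - x‖ ^ 2 < -⟪G x, stdVec i - x⟫ := (one_lt_div hLd).1 hshort
    have hdescent := apply_add_le_of_lipschitz_gradient hG hL x (stdVec i - x)
    rw [one_smul]
    linarith [min_le_right (ρ * g ^ 2 / (2 * L)) (g / 2)]
  · right
    have hlt : x i < 1 := by
      refine (apply_le_one_of_mem_probSimplex hx i).lt_of_ne fun hi => hd ?_
      rw [eq_stdVec_of_apply_eq_one hx hi, sub_self]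
    exact card_coordSupport_drop_step hpos hlt

end AFWStep

theorem le_two_mul_card_filter_of_drop {s : ℕ → ℕ} {p : ℕ → Prop} [DecidablePred p] {T : ℕ}
    (h0 : s 0 = 1) (hT : 1 ≤ s T) (hgrow : ∀ k < T, s (k + 1) ≤ s k + 1)
    (hdrop : ∀ k < T, p k ∨ s (k + 1) + 1 ≤ s k) : T ≤ 2 * #{k ∈ range T | p k} := by
  have hinv : ∀ k ≤ T, s k + 2 * #{j ∈ range k | ¬p j} ≤ 1 + k := by
    intro k
    induction k with
    | zero => simp [h0]
    | succ k ih =>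
      intro hk
      have ih := ih (by omega)
      by_cases hp : p k
      · have := hgrow k hk
        simp only [range_add_one, filter_insert, hp, not_true_eq_false, if_false]
        omega
      · have := (hdrop k hk).resolve_left hp
        rw [range_add_one, filter_insert, if_pos hp, card_insert_of_notMem (by simp)]
        omega
  have hsplit : #{k ∈ range T | p k} + #{k ∈ range T | ¬p k} = T :=
    (card_filter_add_card_filter_not _).trans (card_range T)
  have := hinv T le_rfl
  omega

theorem card_filter_mul_le_sub {u : ℕ → ℝ} {T : ℕ} (hu : ∀ k < T, u (k + 1) ≤ u k) (c : ℝ) :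
    #{k ∈ range T | c ≤ u k - u (k + 1)} * c ≤ u 0 - u T := by
  rw [← sum_range_sub', ← sum_filter_add_sum_filter_not (range T) (fun k => c ≤ u k - u (k + 1))]
  have hgood : #{k ∈ range T | c ≤ u k - u (k + 1)} * c ≤
      ∑ k ∈ range T with c ≤ u k - u (k + 1), (u k - u (k + 1)) := by
    rw [← nsmul_eq_mul]
    exact card_nsmul_le_sum _ _ c fun k hk => (mem_filter.1 hk).2
  have hrest : 0 ≤ ∑ k ∈ range T with ¬c ≤ u k - u (k + 1), (u k - u (k + 1)) :=
    sum_nonneg fun k hk => sub_nonneg.2 (hu k (mem_range.1 (mem_filter.1 hk).1))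
  linarith

theorem le_max_sqrt_of_min_mul_le {g Δ L ρ T : ℝ} (hL : 0 < L) (hρ : 0 < ρ) (hT : 0 < T)
    (h : min (ρ * g ^ 2 / (2 * L)) (g / 2) * T ≤ 2 * Δ) :
    g ≤ max (Real.sqrt (4 * L * Δ / (ρ * T))) (4 * Δ / T) := by
  rcases min_choice (ρ * g ^ 2 / (2 * L)) (g / 2) with hmin | hmin <;> rw [hmin] at h
  · refine le_max_of_le_left (Real.le_sqrt_of_sq_le ?_)
    rw [le_div_iff₀ (by positivity)]
    rw [div_mul_eq_mul_div, div_le_iff₀ (by positivity)] at h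
    linarith
  · refine le_max_of_le_right ?_
    rw [le_div_iff₀ hT]
    linarith

/-- `O(1/√T)` rate for the minimal FW gap of the AFW in the nonconvex case:
for AFW started at a vertex with stepsizes `α_k ≥ ᾱ_k` satisfying the sufficient decrease
condition with constant `ρ > 0`, for every `T`,
`g*_T ≤ max(√(4L(f(x₀) − f*)/(ρT)), 4(f(x₀) − f*)/T)`. -/
theorem afw_nonconvex_gap_rate {n : ℕ} (f : EuclideanSpace ℝ (Fin (n+1)) → ℝ)
    (G : EuclideanSpace ℝ (Fin (n+1)) → EuclideanSpace ℝ (Fin (n+1)))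
    (hG : ∀ x, HasGradientAt f (G x) x) (L : ℝ) (hLpos : 0 < L)
    (hL : ∀ x y, ‖G x - G y‖ ≤ L * ‖x - y‖)
    (fstar : ℝ) (hfstar : IsLeast (f '' probSimplex (n+1)) fstar)
    (x : ℕ → EuclideanSpace ℝ (Fin (n+1)))
    (d : ℕ → EuclideanSpace ℝ (Fin (n+1))) (α αmax ᾱ : ℕ → ℝ)
    (hx0 : ∃ i, x 0 = stdVec i)
    (hxmem : ∀ k, x k ∈ probSimplex (n+1))
    (hstep : ∀ k, x (k + 1) = x k + α k • d k)
    (hdir : ∀ k, (∃ i, d k = stdVec i - x k ∧ αmax k = 1) ∨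
                 (∃ i, 0 < x k i ∧ d k = x k - stdVec i ∧ αmax k = x k i / (1 - x k i)))
    (hsel : ∀ k, fwGap G (x k) ≤ -⟪G (x k), d k⟫)
    (hᾱ : ∀ k, ᾱ k = min (αmax k) (-⟪G (x k), d k⟫ / (L * ‖d k‖ ^ 2)))
    (hα : ∀ k, ᾱ k ≤ α k ∧ α k ≤ αmax k)
    (ρ : ℝ) (hρ : 0 < ρ)
    (hdec : ∀ k, f (x k) - f (x (k + 1)) ≥ ρ * ᾱ k * (-⟪G (x k), d k⟫)) :
    ∀ T : ℕ, ∀ hT : 0 < T,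
      (Finset.range T).inf' (Finset.nonempty_range_iff.mpr hT.ne') (fun k => fwGap G (x k)) ≤
        max (Real.sqrt (4 * L * (f (x 0) - fstar) / (ρ * T))) (4 * (f (x 0) - fstar) / T) := by
  intro T hT
  set gmin := (range T).inf' (nonempty_range_iff.mpr hT.ne') (fun k => fwGap G (x k))
  rcases le_or_gt gmin 0 with hnonpos | hpos
  · exact hnonpos.trans (le_max_of_le_left (Real.sqrt_nonneg _))
  have hslope : ∀ k < T, gmin ≤ -⟪G (x k), d k⟫ := fun k hk =>
    (inf'_le _ (mem_range.2 hk)).trans (hsel k)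
  set c := min (ρ * gmin ^ 2 / (2 * L)) (gmin / 2)
  have hmono : ∀ k < T, f (x (k + 1)) ≤ f (x k) := fun k hk =>
    afw_step_le (hxmem k) (hdir k) (hᾱ k) hLpos.le hρ.le (hdec k) (hpos.le.trans (hslope k hk))
  have hcount : T ≤ 2 * #{k ∈ range T | c ≤ f (x k) - f (x (k + 1))} := by
    refine le_two_mul_card_filter_of_drop (s := fun k => #(coordSupport (x k))) ?_
      (card_pos.2 (coordSupport_nonempty (hxmem T)))
      (fun k _ => hstep k ▸ IsAFWDirection.card_coordSupport_add_smul_le (hdir k) (α k))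
      (fun k hk => afw_step_decrease_or_drop hG hL hLpos hρ (hxmem k) (hdir k) (hstep k) (hᾱ k)
        (hα k) (hdec k) hpos (hslope k hk))
    obtain ⟨i, hi⟩ := hx0
    simp [hi, coordSupport_stdVec]
  have hprogress := card_filter_mul_le_sub (u := fun k => f (x k)) hmono c
  have hfT : fstar ≤ f (x T) := hfstar.2 ⟨x T, hxmem T, rfl⟩
  refine le_max_sqrt_of_min_mul_le hLpos hρ (by positivity) ?_
  calc c * T ≤ c * (2 * #{k ∈ range T | c ≤ f (x k) - f (x (k + 1))}) := by
        gcongr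
        exact_mod_cast hcount
    _ ≤ 2 * (f (x 0) - fstar) := by linarith
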